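/- In the lattice Z^{1+7} with basis L, E_1, …, E_7 and standard del Pezzo intersection form with K = −3L + Σ E_i, the number of classes D = ℓL − Σ a_iE_i with ℓ ≥ 1, D² = 0, D·K = −2, and D·E ≥ 0 for every (−1)-class E equals 126. -/
import Mathlib

open Finset

/-- Intersection form of the del Pezzo Picard lattice ℤ^{1+r} with basis
`L, E_1, …, E_r`: `L² = 1`, `E_i² = -1`, mixed products `0`. -/
def dpForm (r : ℕ) (v w : Fin (r + 1) → ℤ) : ℤ :=
  v 0 * w 0 - ∑ i : Fin r, v i.succ * w i.succ

/-- The canonical class `K = -3L + E_1 + ⋯ + E_r`. -/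
def dpK (r : ℕ) : Fin (r + 1) → ℤ := Fin.cons (-3) fun _ => 1

/-- The class `L`. -/
def eL (r : ℕ) : Fin (r + 1) → ℤ := Fin.cons 1 fun _ => 0

/-- The class `E_i`. -/
def eE (r : ℕ) (i : Fin r) : Fin (r + 1) → ℤ := Fin.cons 0 fun j => if j = i then 1 else 0

/-- A `(-1)`-class: `E² = -1` and `E·K = -1`. -/
def IsMinusOneClass (r : ℕ) (E : Fin (r + 1) → ℤ) : Prop :=
  dpForm r E E = -1 ∧ dpForm r E (dpK r) = -1

/-- A conic class: `D² = 0`, `D·K = -2`, and `D·E ≥ 0` for every `(-1)`-class `E`. -/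
def IsConicClass (r : ℕ) (D : Fin (r + 1) → ℤ) : Prop :=
  dpForm r D D = 0 ∧ dpForm r D (dpK r) = -2 ∧
    ∀ E : Fin (r + 1) → ℤ, IsMinusOneClass r E → 0 ≤ dpForm r D E

/-! Auxiliary lemmas -/

lemma dpForm_apply (r : ℕ) (v w : Fin (r+1) → ℤ) :
    dpForm r v w = v 0 * w 0 - ∑ i : Fin r, v i.succ * w i.succ := rfl

lemma dpForm_add_left (r : ℕ) (u v w : Fin (r+1) → ℤ) :
    dpForm r (u + v) w = dpForm r u w + dpForm r v w := by
  simp [dpForm, add_mul, Finset.sum_add_distrib]; ring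

lemma dpForm_add_right (r : ℕ) (u v w : Fin (r+1) → ℤ) :
    dpForm r u (v + w) = dpForm r u v + dpForm r u w := by
  simp [dpForm, mul_add, Finset.sum_add_distrib]; ring

lemma dpForm_smul_left (r : ℕ) (c : ℤ) (v w : Fin (r+1) → ℤ) :
    dpForm r (c • v) w = c * dpForm r v w := by
  simp only [dpForm, Pi.smul_apply, smul_eq_mul, mul_sub, Finset.mul_sum, mul_assoc]

lemma dpForm_smul_right (r : ℕ) (c : ℤ) (v w : Fin (r+1) → ℤ) :
    dpForm r v (c • w) = c * dpForm r v w := by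
  simp only [dpForm, Pi.smul_apply, smul_eq_mul, mul_sub, Finset.mul_sum]
  congr 1
  · ring
  · exact Finset.sum_congr rfl fun i _ => by ring

lemma dpForm_symm (r : ℕ) (v w : Fin (r+1) → ℤ) :
    dpForm r v w = dpForm r w v := by
  simp [dpForm, mul_comm]

/-- Negative semidefiniteness on `K^⊥` for `r = 7`. -/
lemma dpForm_neg_of_orth (v : Fin 8 → ℤ) (h : dpForm 7 v (dpK 7) = 0) :
    dpForm 7 v v ≤ 0 := by
  have hK : dpForm 7 v (dpK 7) = v 0 * (-3) - ∑ i : Fin 7, v i.succ := by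
    simp [dpForm, dpK]
  have hsum : ∑ i : Fin 7, v i.succ = -3 * v 0 := by rw [hK] at h; linarith
  have hcs : (∑ i : Fin 7, v i.succ) ^ 2 ≤ 7 * ∑ i : Fin 7, (v i.succ) ^ 2 := by
    simpa using sq_sum_le_card_mul_sum_sq (s := (univ : Finset (Fin 7)))
      (f := fun i => v i.succ)
  have hsq : ∑ i : Fin 7, v i.succ * v i.succ = ∑ i : Fin 7, (v i.succ) ^ 2 := by
    simp [sq]
  rw [dpForm_apply, hsq]
  rw [hsum] at hcs
  nlinarith [hcs, sq_nonneg (v 0)]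

lemma KK : dpForm 7 (dpK 7) (dpK 7) = 2 := by decide

/-- Pairing of a "conic-numerical" class with a (-1)-class is in `[0, 2]`. -/
lemma conic_pair_bounds (D E : Fin 8 → ℤ)
    (hDD : dpForm 7 D D = 0) (hDK : dpForm 7 D (dpK 7) = -2)
    (hEE : dpForm 7 E E = -1) (hEK : dpForm 7 E (dpK 7) = -1) :
    0 ≤ dpForm 7 D E ∧ dpForm 7 D E ≤ 2 := by
  have hKD : dpForm 7 (dpK 7) D = -2 := by rw [dpForm_symm]; exact hDK
  have hKE : dpForm 7 (dpK 7) E = -1 := by rw [dpForm_symm]; exact hEK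
  have hED : dpForm 7 E D = dpForm 7 D E := dpForm_symm 7 E D
  set s := dpForm 7 D E with hs
  have hle := dpForm_neg_of_orth
    ((2 * s - 2) • (D + dpK 7) + (2 : ℤ) • ((2 : ℤ) • E + dpK 7)) (by
      simp only [dpForm_add_left, dpForm_smul_left, hDK, hEK, KK]; ring)
  have hvv : dpForm 7 ((2 * s - 2) • (D + dpK 7) + (2 : ℤ) • ((2 : ℤ) • E + dpK 7))
      ((2 * s - 2) • (D + dpK 7) + (2 : ℤ) • ((2 : ℤ) • E + dpK 7))
      = 2 * (2 * s - 2) ^ 2 - 24 := by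
    simp only [dpForm_add_left, dpForm_add_right, dpForm_smul_left, dpForm_smul_right,
      hDD, hDK, hKD, hEE, hEK, hKE, hED, KK, ← hs]
    ring
  rw [hvv] at hle
  constructor <;> nlinarith [sq_nonneg (s - 1)]

/-- Parametrization of candidate conic classes. -/
def dpg : Fin 5 × (Fin 7 → Fin 3) → (Fin 8 → ℤ) :=
  fun la => Fin.cons ((la.1 : ℤ) + 1) fun i => -((la.2 i : ℕ) : ℤ)

def dpp (la : Fin 5 × (Fin 7 → Fin 3)) : Prop :=
  (∑ i, ((la.2 i : ℕ))) = 3 * (la.1 : ℕ) + 1 ∧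
    (∑ i, ((la.2 i : ℕ)) ^ 2) = ((la.1 : ℕ) + 1) ^ 2

instance : DecidablePred dpp := fun _ => by unfold dpp; infer_instance

set_option maxRecDepth 1000000 in
set_option maxHeartbeats 4000000 in
lemma dpp_count : (Finset.univ.filter dpp).card = 126 := by decide

lemma dpg_inj : Function.Injective dpg := by
  rintro ⟨l, a⟩ ⟨m, b⟩ h
  have h0 := congrFun h 0
  have hi := fun i : Fin 7 => congrFun h i.succ
  simp only [dpg, Fin.cons_zero, Fin.cons_succ] at h0 hi
  have hlm : l = m := by
    have : (l : ℕ) = (m : ℕ) := by exact_mod_cast by linarith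
    exact Fin.ext this
  have hab : a = b := by
    funext i
    have : ((a i : ℕ) : ℤ) = ((b i : ℕ) : ℤ) := by linarith [hi i]
    exact Fin.ext (by exact_mod_cast this)
  rw [hlm, hab]

lemma eE_minusone (i : Fin 7) : IsMinusOneClass 7 (eE 7 i) := by
  unfold IsMinusOneClass
  revert i; decide

lemma dpForm_eE (D : Fin 8 → ℤ) (i : Fin 7) : dpForm 7 D (eE 7 i) = -D i.succ := by
  simp [dpForm, eE, Fin.cons_succ, Fin.cons_zero, mul_ite, mul_one, mul_zero,
    Finset.sum_ite_eq', Finset.mem_univ]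

lemma dpForm_K (D : Fin 8 → ℤ) : dpForm 7 D (dpK 7) = -3 * D 0 - ∑ i : Fin 7, D i.succ := by
  simp [dpForm, dpK, Fin.cons_succ, Fin.cons_zero]; ring

/-- On a del Pezzo surface of degree 2 (`r = 7`) the number of conic classes
`D = ℓL - Σ a_iE_i` with `ℓ ≥ 1` is 126. -/
theorem stmt4 :
    {D : Fin 8 → ℤ | 1 ≤ D 0 ∧ IsConicClass 7 D}.ncard = 126 := by
  have hset : {D : Fin 8 → ℤ | 1 ≤ D 0 ∧ IsConicClass 7 D}
      = ↑((Finset.univ.filter dpp).image dpg) := by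
    ext D
    simp only [Set.mem_setOf_eq, Finset.coe_image, Set.mem_image, Finset.mem_coe,
      Finset.mem_filter, Finset.mem_univ, true_and]
    constructor
    · rintro ⟨hl, hDD, hDK, hpos⟩
      -- coordinate bounds
      have hb : ∀ i : Fin 7, -2 ≤ D i.succ ∧ D i.succ ≤ 0 := by
        intro i
        have h1 := hpos (eE 7 i) (eE_minusone i)
        have h2 := (conic_pair_bounds D (eE 7 i) hDD hDK
          (eE_minusone i).1 (eE_minusone i).2).2
        rw [dpForm_eE] at h1 h2
        omega
      have hsum : ∑ i : Fin 7, D i.succ = 2 - 3 * D 0 := by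
        have := dpForm_K D; rw [hDK] at this; linarith
      have hsq : ∑ i : Fin 7, D i.succ * D i.succ = D 0 * D 0 := by
        rw [dpForm_apply] at hDD; linarith
      have hcs : (∑ i : Fin 7, D i.succ) ^ 2 ≤ 7 * ∑ i : Fin 7, (D i.succ) ^ 2 := by
        simpa using sq_sum_le_card_mul_sum_sq (s := (univ : Finset (Fin 7)))
          (f := fun i => D i.succ)
      have hsq' : ∑ i : Fin 7, (D i.succ) ^ 2 = D 0 * D 0 := by
        rw [← hsq]; exact Finset.sum_congr rfl fun i _ => by ring
      have hl5 : D 0 ≤ 5 := by nlinarith [hcs, hsum, hsq', hl]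
      refine ⟨⟨⟨(D 0 - 1).toNat, by omega⟩, fun i => ⟨(-D i.succ).toNat,
        by have := hb i; omega⟩⟩, ?_, ?_⟩
      · -- dpp holds
        have hc0 : (((D 0 - 1).toNat : ℕ) : ℤ) = D 0 - 1 := Int.toNat_of_nonneg (by omega)
        constructor
        · have : ((∑ i : Fin 7, (-D i.succ).toNat : ℕ) : ℤ)
              = ((3 * (D 0 - 1).toNat + 1 : ℕ) : ℤ) := by
            push_cast
            rw [Finset.sum_congr rfl fun (i : Fin 7) _ =>
              (Int.toNat_of_nonneg (by have := hb i; omega) : ((-D i.succ).toNat : ℤ) = -D i.succ)]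
            rw [Finset.sum_neg_distrib, hsum, hc0]; ring
          exact_mod_cast this
        · have : ((∑ i : Fin 7, (-D i.succ).toNat ^ 2 : ℕ) : ℤ)
              = (((((D 0 - 1).toNat) + 1) ^ 2 : ℕ) : ℤ) := by
            push_cast
            rw [Finset.sum_congr rfl fun (i : Fin 7) _ => by
              rw [(Int.toNat_of_nonneg (by have := hb i; omega) :
                ((-D i.succ).toNat : ℤ) = -D i.succ)]]
            rw [hc0]
            have : ∑ i : Fin 7, (-D i.succ) ^ 2 = ∑ i : Fin 7, (D i.succ) ^ 2 :=
              Finset.sum_congr rfl fun i _ => by ring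
            rw [this, hsq']; ring
          exact_mod_cast this
      · -- dpg of it is D
        funext j
        refine Fin.cases ?_ ?_ j
        · show ((((D 0 - 1).toNat : ℕ) : ℤ) + 1) = D 0
          rw [Int.toNat_of_nonneg (by omega)]; ring
        · intro i
          show -(((-D i.succ).toNat : ℕ) : ℤ) = D i.succ
          rw [Int.toNat_of_nonneg (by have := hb i; omega)]; ring
    · rintro ⟨⟨l, a⟩, ⟨h1, h2⟩, rfl⟩
      have hD0 : dpg (l, a) 0 = (l : ℤ) + 1 := rfl
      have hDi : ∀ i : Fin 7, dpg (l, a) i.succ = -((a i : ℕ) : ℤ) := fun i => rfl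
      have h1' : (∑ i : Fin 7, ((a i : ℕ) : ℤ)) = 3 * (l : ℕ) + 1 := by
        exact_mod_cast congrArg (Nat.cast : ℕ → ℤ) h1
      have h2' : (∑ i : Fin 7, ((a i : ℕ) : ℤ) ^ 2) = ((l : ℕ) + 1) ^ 2 := by
        exact_mod_cast congrArg (Nat.cast : ℕ → ℤ) h2
      have e1 : ∑ i : Fin 7, dpg (l, a) i.succ * dpg (l, a) i.succ
          = ∑ i : Fin 7, ((a i : ℕ) : ℤ) ^ 2 :=
        Finset.sum_congr rfl fun i _ => by rw [hDi i]; ring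
      have e2 : ∑ i : Fin 7, dpg (l, a) i.succ = -∑ i : Fin 7, ((a i : ℕ) : ℤ) := by
        rw [← Finset.sum_neg_distrib]
        exact Finset.sum_congr rfl fun i _ => hDi i
      have hDD : dpForm 7 (dpg (l, a)) (dpg (l, a)) = 0 := by
        rw [dpForm_apply, hD0, e1, h2']; push_cast; ring
      have hDK : dpForm 7 (dpg (l, a)) (dpK 7) = -2 := by
        rw [dpForm_K, hD0, e2, h1']; push_cast; ring
      refine ⟨?_, hDD, hDK, ?_⟩
      · rw [hD0]
        have : (0:ℤ) ≤ (l : ℕ) := Int.natCast_nonneg _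
        linarith
      · intro E hE
        exact (conic_pair_bounds _ E hDD hDK hE.1 hE.2).1
  rw [hset, Set.ncard_coe_finset, Finset.card_image_of_injective _ dpg_inj, dpp_count]
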